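/- For every measurable compactly supported function f: ℝ → [0,1), the sum ∑_{n=0}^∞ E[f(R·(ρ_n − R))] converges, as R → +∞, to 2·∫_ℝ f(x) dx. -/

import Mathlib

/-!
Summing the densities of the `ρ_n` gives `∑_n 2 r^{2n+1} e^{-r²}/n! = 2r` on `r ≥ 0` (the exponential
series), so by monotone convergence `∑_n E[f(R(ρ_n − R))] = ∫_0^∞ 2r f(R(r − R)) dr`. The substitution
`x = R(r − R)` turns this into `∫ (2 + 2x/R²) f(x) dx` as soon as `R²` exceeds the radius of the support
of `f`, which tends to `2 ∫ f`.
-/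

open MeasureTheory ProbabilityTheory Filter Real Set Topology

noncomputable def ginibreModulusDensity (n : ℕ) (r : ℝ) : ℝ :=
  (Ici (0 : ℝ)).indicator (fun r => 2 * r ^ (2 * n + 1) * Real.exp (-r ^ 2) / (Nat.factorial n)) r

lemma ginibreModulusDensity_nonneg (n : ℕ) (r : ℝ) : 0 ≤ ginibreModulusDensity n r :=
  indicator_nonneg (fun r (hr : 0 ≤ r) => by positivity) r

lemma measurable_ginibreModulusDensity (n : ℕ) : Measurable (ginibreModulusDensity n) :=
  (by fun_prop : Measurable _).indicator measurableSet_Ici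

lemma hasSum_ginibreModulusDensity (r : ℝ) :
    HasSum (fun n => ginibreModulusDensity n r) ((Ici (0 : ℝ)).indicator (fun r => 2 * r) r) := by
  by_cases hr : r ∈ Ici (0 : ℝ)
  · have hterm : ∀ n : ℕ, ginibreModulusDensity n r
        = 2 * r * Real.exp (-r ^ 2) * ((r ^ 2) ^ n / (Nat.factorial n)) := fun n => by
      rw [ginibreModulusDensity, indicator_of_mem hr, pow_succ, pow_mul]
      ring
    have hexp : HasSum (fun n : ℕ => (r ^ 2) ^ n / (Nat.factorial n)) (Real.exp (r ^ 2)) := by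
      rw [Real.exp_eq_exp_ℝ]
      exact NormedSpace.expSeries_div_hasSum_exp (r ^ 2)
    have hcancel : 2 * r * Real.exp (-r ^ 2) * Real.exp (r ^ 2) = 2 * r := by
      rw [mul_assoc, ← Real.exp_add, neg_add_cancel, Real.exp_zero, mul_one]
    have h := hexp.mul_left (2 * r * Real.exp (-r ^ 2))
    simp only [hcancel, ← hterm] at h
    rwa [indicator_of_mem hr]
  · simp [ginibreModulusDensity, indicator_of_notMem hr]

lemma tsum_integral_comp_eq_integral_mul {Ω : Type*} [MeasurableSpace Ω] {μ : Measure Ω}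
    {X : ℕ → Ω → ℝ} (hX : ∀ n, Measurable (X n)) {d : ℕ → ℝ → ℝ}
    (hd_meas : ∀ n, Measurable (d n)) (hd_nonneg : ∀ n r, 0 ≤ d n r)
    (hlaw : ∀ n, μ.map (X n) = volume.withDensity (fun r => ENNReal.ofReal (d n r)))
    {D : ℝ → ℝ} (hD : ∀ r, HasSum (fun n => d n r) (D r))
    {g : ℝ → ℝ} (hg_meas : Measurable g) (hg_nonneg : ∀ x, 0 ≤ g x)
    (hg_int : ∀ n, Integrable (fun ω => g (X n ω)) μ) :
    ∑' n, ∫ ω, g (X n ω) ∂μ = ∫ r, D r * g r := by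
  have hD_nonneg : ∀ r, 0 ≤ D r := fun r => (hD r).nonneg (hd_nonneg · r)
  have hD_meas : Measurable D := measurable_of_tendsto_metrizable
    (fun n => Finset.measurable_sum _ fun i _ => hd_meas i)
    (tendsto_pi_nhds.2 fun r => (hD r).tendsto_sum_nat)
  have hterm : ∀ n, ∫⁻ ω, ENNReal.ofReal (g (X n ω)) ∂μ
      = ∫⁻ r, ENNReal.ofReal (d n r) * ENNReal.ofReal (g r) := fun n => by
    refine (lintegral_map (f := fun x => ENNReal.ofReal (g x)) (by fun_prop) (hX n)).symm.trans ?_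
    rw [hlaw n, lintegral_withDensity_eq_lintegral_mul _ (by fun_prop) (by fun_prop)]
    rfl
  have hsum : ∀ r, ∑' n, ENNReal.ofReal (d n r) = ENNReal.ofReal (D r) := fun r => by
    rw [← (hD r).tsum_eq, ENNReal.ofReal_tsum_of_nonneg (hd_nonneg · r) (hD r).summable]
  calc ∑' n, ∫ ω, g (X n ω) ∂μ
      = ∑' n, (∫⁻ ω, ENNReal.ofReal (g (X n ω)) ∂μ).toReal := by
        congr 1 with n
        exact integral_eq_lintegral_of_nonneg_ae (ae_of_all _ fun ω => hg_nonneg _)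
          (hg_int n).aestronglyMeasurable
    _ = (∑' n, ∫⁻ r, ENNReal.ofReal (d n r) * ENNReal.ofReal (g r)).toReal := by
        rw [← ENNReal.tsum_toReal_eq fun n => (hg_int n).lintegral_lt_top.ne]
        simp_rw [hterm]
    _ = (∫⁻ r, ENNReal.ofReal (D r * g r)).toReal := by
        rw [← lintegral_tsum fun n => by fun_prop]
        simp_rw [ENNReal.tsum_mul_right, hsum, ENNReal.ofReal_mul (hD_nonneg _)]
    _ = ∫ r, D r * g r :=
        (integral_eq_lintegral_of_nonneg_ae (ae_of_all _ fun r => mul_nonneg (hD_nonneg r)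
          (hg_nonneg r)) (hD_meas.mul hg_meas).aestronglyMeasurable).symm

lemma HasCompactSupport.integrable_of_bound {X E : Type*} [TopologicalSpace X] [MeasurableSpace X]
    [OpensMeasurableSpace X] [NormedAddCommGroup E] {μ : Measure X} [IsFiniteMeasureOnCompacts μ]
    {f : X → E} (hcf : HasCompactSupport f) (hf : AEStronglyMeasurable f μ) (C : ℝ)
    (hfC : ∀ x ∈ tsupport f, ‖f x‖ ≤ C) : Integrable f μ :=
  (integrableOn_iff_integrable_of_support_subset (subset_tsupport f)).1 <|
    .of_bound hcf.isCompact.measure_lt_top hf.restrict C <|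
      ae_restrict_of_forall_mem (isClosed_tsupport f).measurableSet hfC

lemma integral_indicator_two_mul_comp_rescale {f : ℝ → ℝ} {R : ℝ} (hR : 0 < R)
    (hf : ∀ x, f x ≠ 0 → -R ^ 2 ≤ x) :
    ∫ r, (Ici (0 : ℝ)).indicator (fun r => 2 * r) r * f (R * (r - R))
      = ∫ x, (2 + 2 / R ^ 2 * x) * f x := by
  set G : ℝ → ℝ := fun r => (Ici (0 : ℝ)).indicator (fun r => 2 * r) r * f (R * (r - R))
  have hG : ∀ x, R⁻¹ * G (x / R + R) = (2 + 2 / R ^ 2 * x) * f x := fun x => by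
    have harg : R * (x / R + R - R) = x := by field_simp; ring
    by_cases hfx : f x = 0
    · simp only [G, harg, hfx, mul_zero]
    · have hmem : x / R + R ∈ Ici (0 : ℝ) := by
        rw [mem_Ici, div_add' _ _ _ hR.ne']
        exact div_nonneg (by linarith [hf x hfx]) hR.le
      simp only [G, indicator_of_mem hmem, harg]
      field_simp
      ring
  calc ∫ r, G r = R⁻¹ * (|R| • ∫ r, G (r + R)) := by
        rw [integral_add_right_eq_self, abs_of_pos hR, smul_eq_mul, inv_mul_cancel_left₀ hR.ne']
    _ = ∫ x, R⁻¹ * G (x / R + R) := by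
        rw [← Measure.integral_comp_div (fun r => G (r + R)), integral_const_mul]
    _ = ∫ x, (2 + 2 / R ^ 2 * x) * f x := by simp_rw [hG]

lemma tendsto_integral_two_add_div_sq_mul {f : ℝ → ℝ} (hf : Integrable f)
    (hxf : Integrable fun x => x * f x) :
    Tendsto (fun R : ℝ => ∫ x, (2 + 2 / R ^ 2 * x) * f x) atTop (𝓝 (2 * ∫ x, f x)) := by
  have hsplit : ∀ R : ℝ, ∫ x, (2 + 2 / R ^ 2 * x) * f x
      = 2 * (∫ x, f x) + 2 / R ^ 2 * ∫ x, x * f x := fun R => by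
    simp_rw [add_mul, mul_assoc]
    rw [integral_add (hf.const_mul 2) (hxf.const_mul _), integral_const_mul, integral_const_mul]
  simp_rw [hsplit]
  simpa using (tendsto_const_nhds (x := 2 * ∫ x, f x)).add
    ((tendsto_const_nhds.div_atTop (tendsto_pow_atTop two_ne_zero)).mul_const (∫ x, x * f x))

theorem stmt17_general
    {Ω : Type*} [MeasureSpace Ω] [IsProbabilityMeasure (ℙ : Measure Ω)]
    (ρ : ℕ → Ω → ℝ)
    (hρ_meas : ∀ n, Measurable (ρ n))
    (hρ_law : ∀ n : ℕ, (ℙ : Measure Ω).map (ρ n) =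
      volume.withDensity (fun r => ENNReal.ofReal
        (Set.indicator (Set.Ici (0 : ℝ))
          (fun r => 2 * r ^ (2 * n + 1) * Real.exp (-r ^ 2) / (Nat.factorial n)) r)))
    (f : ℝ → ℝ) (hf_meas : Measurable f) (hf_supp : HasCompactSupport f)
    (hf_range : ∀ x, f x ∈ Set.Ico (0 : ℝ) 1) :
    Tendsto (fun R : ℝ => ∑' n : ℕ, ∫ ω, f (R * (ρ n ω - R)) ∂ℙ)
      atTop (nhds (2 * ∫ x : ℝ, f x)) := by
  obtain ⟨r₀, hr₀⟩ := hf_supp.isCompact.isBounded.subset_closedBall 0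
  have habs : ∀ x ∈ tsupport f, |x| ≤ r₀ := fun x hx => by simpa using hr₀ hx
  have hf_abs : ∀ x, |f x| ≤ 1 := fun x => abs_le.2 ⟨by linarith [(hf_range x).1], (hf_range x).2.le⟩
  have hf_int : Integrable f := hf_supp.integrable_of_bound hf_meas.aestronglyMeasurable 1
    fun x _ => hf_abs x
  have hxf_int : Integrable fun x => x * f x :=
    hf_supp.mul_left.integrable_of_bound (by fun_prop) r₀ fun x hx => by
      have hx₀ := habs x (tsupport_mul_subset_right hx)
      simpa [abs_mul] using mul_le_mul hx₀ (hf_abs x) (abs_nonneg _) ((abs_nonneg x).trans hx₀)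
  refine (tendsto_integral_two_add_div_sq_mul hf_int hxf_int).congr' ?_
  filter_upwards [eventually_gt_atTop 0, (tendsto_pow_atTop two_ne_zero).eventually_ge_atTop r₀]
    with R hR hR₀
  have hf_rescaled : Measurable fun r => f (R * (r - R)) := hf_meas.comp (by fun_prop)
  rw [← integral_indicator_two_mul_comp_rescale hR fun x hx => ?_]
  · refine (tsum_integral_comp_eq_integral_mul hρ_meas measurable_ginibreModulusDensity
      ginibreModulusDensity_nonneg hρ_law hasSum_ginibreModulusDensity hf_rescaled
      (fun x => (hf_range _).1) fun n => ?_).symm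
    exact .of_bound (hf_rescaled.comp (hρ_meas n)).aestronglyMeasurable 1
      (ae_of_all _ fun ω => hf_abs _)
  · linarith [neg_abs_le x, habs x (subset_tsupport f hx)]

/-- convergence of intensities for the rescaled Ginibre moduli:
`∑_n E[f(R (ρ_n − R))] → 2 ∫_ℝ f(x) dx` as `R → +∞`. -/
theorem stmt17
    {Ω : Type*} [MeasureSpace Ω] [IsProbabilityMeasure (ℙ : Measure Ω)]
    (ρ : ℕ → Ω → ℝ)
    (hρ_meas : ∀ n, Measurable (ρ n))
    (hρ_nonneg : ∀ n, ∀ ω, 0 ≤ ρ n ω)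
    (hρ_indep : iIndepFun ρ ℙ)
    (hρ_law : ∀ n : ℕ, (ℙ : Measure Ω).map (ρ n) =
      volume.withDensity (fun r => ENNReal.ofReal
        (Set.indicator (Set.Ici (0 : ℝ))
          (fun r => 2 * r ^ (2 * n + 1) * Real.exp (-r ^ 2) / (Nat.factorial n)) r)))
    (f : ℝ → ℝ) (hf_meas : Measurable f) (hf_supp : HasCompactSupport f)
    (hf_range : ∀ x, f x ∈ Set.Ico (0 : ℝ) 1) :
    Tendsto (fun R : ℝ => ∑' n : ℕ, ∫ ω, f (R * (ρ n ω - R)) ∂ℙ)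
      atTop (nhds (2 * ∫ x : ℝ, f x)) :=
  stmt17_general ρ hρ_meas hρ_law f hf_meas hf_supp hf_range
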